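/- Fix an integer d ≥ 1, δ ∈ (0,1), and p ∈ (0,∞), and suppose ρ = ρ(g) is chosen so that α(g,ρ(g)) = (ρ(g)−1)/(2√g) → +∞ and g^{−1/2} e^{α(g,ρ(g))²} → p as g → ∞. Let z = (2d)^{−1}(1−δ) p √π and define μ(g,ρ) = limsup_{n→∞} w_n(g,ρ)^{1/n}. Then limsup_{g→∞} μ(g,ρ(g)) ≤ z·μ, where μ is the connective constant of the self-avoiding walk. -/

import Mathlib

/-!
Formalization of statements from "The strong interaction limit of
continuous-time weakly self-avoiding walk" by Brydges, Dahlqvist, Slade.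

An `n`-step nearest-neighbour walk on `ℤ^d` starting at the origin is encoded
bijectively by its sequence of steps `s : Fin n → Fin d × Bool`, a step being a
coordinate direction together with a sign.
-/

open scoped BigOperators Topology
open Filter

namespace StrongInteraction

/-- The unit step in coordinate direction `e.1`, with sign `e.2`. -/
def stepVec (d : ℕ) (e : Fin d × Bool) : Fin d → ℤ :=
  fun i => if i = e.1 then (if e.2 then 1 else -1) else 0

/-- `walkPos s k` is the position `Y_k` of the walk started at the origin whose
successive nearest-neighbour steps are given by `s`. -/
def walkPos {d n : ℕ} (s : Fin n → Fin d × Bool) (k : Fin (n + 1)) : Fin d → ℤ :=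
  ∑ i ∈ Finset.univ.filter (fun i : Fin n => (i : ℕ) < (k : ℕ)), stepVec d (s i)

/-- `n_x(Y)`: the number of visits to `x` by the walk. -/
def visits {d n : ℕ} (s : Fin n → Fin d × Bool) (x : Fin d → ℤ) : ℕ :=
  (Finset.univ.filter (fun k : Fin (n + 1) => walkPos s k = x)).card

/-- The set of distinct vertices visited by the walk. -/
def walkRange {d n : ℕ} (s : Fin n → Fin d × Bool) : Finset (Fin d → ℤ) :=
  Finset.image (walkPos s) Finset.univ

/-- A walk is self-avoiding when its positions are pairwise distinct. -/
def SelfAvoiding {d n : ℕ} (s : Fin n → Fin d × Bool) : Prop :=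
  Function.Injective (walkPos s)

instance {d n : ℕ} (s : Fin n → Fin d × Bool) : Decidable (SelfAvoiding s) :=
  inferInstanceAs (Decidable (Function.Injective (walkPos s)))

/-- `c_n`: the number of `n`-step self-avoiding walks. -/
def csaw (d n : ℕ) : ℕ :=
  (Finset.univ.filter fun s : Fin n → Fin d × Bool => SelfAvoiding s).card


/-- `F_{g,ρ}(m) = ∫_0^∞ (s^{m-1}/(m-1)!) e^{-s - g s² + ρ s} ds`, the contribution
of a vertex visited `m` times, obtained from the Gamma(m,1) density of the sum of
`m` independent Exp(1) holding times. -/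
noncomputable def F (g ρ : ℝ) (m : ℕ) : ℝ :=
  ∫ t in Set.Ioi (0 : ℝ),
    (t ^ (m - 1) / (Nat.factorial (m - 1))) * Real.exp (-t - g * t ^ 2 + ρ * t)

/-- `w_n(g,ρ)`: the total continuous-time weakly self-avoiding walk weight of
`n`-step walks, for killing rate `δ`. -/
noncomputable def wTot (d : ℕ) (δ : ℝ) (n : ℕ) (g ρ : ℝ) : ℝ :=
  ((1 - δ) / (2 * d)) ^ n *
    ∑ s : Fin n → Fin d × Bool, ∏ v ∈ walkRange s, F g ρ (visits s v)

/-!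
Put `γ = √π e^{-α² + α + 9/4}`. Bounding the Gamma density `t^{m-1}/(m-1)!` by
`g^{-(m-1)/2} e^{√g t}` and completing the square against a lower bound for `F(1)` gives
`F(m) ≤ F(1)^m γ^{m-1}`, so a walk pays a factor `γ → 0` for every return to a vertex it has
already visited. Cutting a walk at its first revisit into a self-avoiding prefix, one step and a
suffix with strictly fewer revisits yields a renewal inequality for `∑_Y γ^{#revisits(Y)}`, whose
solution grows no faster than `(μ + ε)^n` once `γ` is small. Hence
`μ(g, ρ(g)) ≤ (2d)⁻¹(1 - δ) F(1) (μ + ε)`, and `F(1) ≤ √π g^{-1/2} e^{α²} → √π p`.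
-/

open MeasureTheory Real

noncomputable def alpha (g ρ : ℝ) : ℝ := (ρ - 1) / (2 * √g)

-- `9 / 4` makes `sqrt_pi_mul_exp_le_pow_mul_revisitFactor_pow` an equality of exponents at `k = 1`.
noncomputable def revisitFactor (a : ℝ) : ℝ := √π * exp (-a ^ 2 + a + 9 / 4)

lemma revisitFactor_nonneg (a : ℝ) : 0 ≤ revisitFactor a := by
  unfold revisitFactor; positivity

lemma tendsto_revisitFactor_atTop : Tendsto revisitFactor atTop (𝓝 0) := by
  unfold revisitFactor
  have h : Tendsto (fun a : ℝ => -a ^ 2 + a + 9 / 4) atTop atBot := by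
    refine tendsto_atBot_mono' atTop ?_
      (tendsto_atBot_add_const_right _ (9 / 4) tendsto_neg_atTop_atBot)
    filter_upwards [eventually_ge_atTop (2 : ℝ)] with a ha
    nlinarith
  simpa using (tendsto_exp_atBot.comp h).const_mul √π

lemma alpha_sq {g : ℝ} (hg : 0 ≤ g) (ρ : ℝ) : alpha g ρ ^ 2 = (ρ - 1) ^ 2 / (4 * g) := by
  rw [alpha, div_pow, mul_pow, sq_sqrt hg]; norm_num

lemma alpha_add_sqrt {g : ℝ} (hg : 0 < g) (ρ : ℝ) :
    alpha g (ρ + √g) = alpha g ρ + 1 / 2 := by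
  have : √g ≠ 0 := (sqrt_pos.2 hg).ne'
  rw [alpha, alpha]; field_simp; ring

lemma F_nonneg (g ρ : ℝ) (m : ℕ) : 0 ≤ F g ρ m :=
  setIntegral_nonneg measurableSet_Ioi fun t (ht : 0 < t) => by positivity

lemma exp_neg_mul_sq_add_mul {g : ℝ} (hg : g ≠ 0) (b t : ℝ) :
    exp (-g * t ^ 2 + b * t) = exp (b ^ 2 / (4 * g)) * exp (-g * (t - b / (2 * g)) ^ 2) := by
  rw [← exp_add]; congr 1; field_simp; ring

lemma integrable_exp_neg_mul_sq_add_mul {g : ℝ} (hg : 0 < g) (b : ℝ) :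
    Integrable fun t : ℝ => exp (-g * t ^ 2 + b * t) := by
  simp_rw [exp_neg_mul_sq_add_mul hg.ne']
  exact ((integrable_exp_neg_mul_sq hg).comp_sub_right _).const_mul _

lemma integral_exp_neg_mul_sq_add_mul {g : ℝ} (hg : 0 < g) (b : ℝ) :
    ∫ t : ℝ, exp (-g * t ^ 2 + b * t) = √(π / g) * exp (b ^ 2 / (4 * g)) := by
  simp_rw [exp_neg_mul_sq_add_mul hg.ne']
  rw [integral_const_mul, integral_sub_right_eq_self (fun t => exp (-g * t ^ 2)),
    integral_gaussian, mul_comm]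

lemma F_one_eq (g ρ : ℝ) : F g ρ 1 = ∫ t in Set.Ioi 0, exp (-g * t ^ 2 + (ρ - 1) * t) := by
  refine setIntegral_congr_fun measurableSet_Ioi fun t _ => ?_
  simp only [Nat.sub_self, pow_zero, Nat.factorial_zero, Nat.cast_one, div_one, one_mul]
  ring_nf

lemma F_one_le {g : ℝ} (hg : 0 < g) (ρ : ℝ) :
    F g ρ 1 ≤ √π * (√g)⁻¹ * exp (alpha g ρ ^ 2) := by
  rw [F_one_eq, alpha_sq hg.le, ← sqrt_inv, ← sqrt_mul pi_nonneg, ← div_eq_mul_inv,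
    ← integral_exp_neg_mul_sq_add_mul hg]
  exact setIntegral_le_integral (integrable_exp_neg_mul_sq_add_mul hg _)
    (Eventually.of_forall fun _ => (exp_pos _).le)

lemma F_one_ge {g ρ : ℝ} (hg : 0 < g) (hρ : 1 ≤ ρ) :
    (√g)⁻¹ * exp (alpha g ρ ^ 2 - 1) ≤ F g ρ 1 := by
  set β := (ρ - 1) / (2 * g)
  have hβ : 0 ≤ β := div_nonneg (by linarith) (by positivity)
  have hI : Set.Ioc β (β + (√g)⁻¹) ⊆ Set.Ioi 0 := fun t ht => hβ.trans_lt ht.1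
  -- the integrand is `e^{α²} e^{-g (t - β)²} ≥ e^{α² - 1}` on `(β, β + g^{-1/2}]`
  have hlow : ∀ t ∈ Set.Ioc β (β + (√g)⁻¹),
      exp (alpha g ρ ^ 2 - 1) ≤ exp (-g * t ^ 2 + (ρ - 1) * t) := by
    intro t ht
    have h1 : g * (t - β) ^ 2 ≤ 1 := by
      have : (t - β) ^ 2 ≤ ((√g)⁻¹) ^ 2 :=
        pow_le_pow_left₀ (by linarith [ht.1]) (by linarith [ht.2]) 2
      calc g * (t - β) ^ 2 ≤ g * ((√g)⁻¹) ^ 2 := by gcongr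
        _ = 1 := by rw [inv_pow, sq_sqrt hg.le, mul_inv_cancel₀ hg.ne']
    rw [exp_neg_mul_sq_add_mul hg.ne', ← alpha_sq hg.le, ← exp_add]
    exact exp_le_exp.2 (by linarith)
  have hvol : volume.real (Set.Ioc β (β + (√g)⁻¹)) = (√g)⁻¹ := by
    rw [measureReal_def, volume_Ioc, add_sub_cancel_left, ENNReal.toReal_ofReal (by positivity)]
  calc (√g)⁻¹ * exp (alpha g ρ ^ 2 - 1)
      ≤ ∫ t in Set.Ioc β (β + (√g)⁻¹), exp (-g * t ^ 2 + (ρ - 1) * t) := by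
        have := setIntegral_ge_of_const_le measurableSet_Ioc measure_Ioc_lt_top.ne hlow
          (integrable_exp_neg_mul_sq_add_mul hg _).integrableOn
        rwa [hvol, smul_eq_mul] at this
    _ ≤ F g ρ 1 := by
        rw [F_one_eq]
        exact setIntegral_mono_set (integrable_exp_neg_mul_sq_add_mul hg _).integrableOn
          (Eventually.of_forall fun _ => (exp_pos _).le) hI.eventuallyLE

lemma F_succ_le_inv_pow_mul {g c : ℝ} (hg : 0 < g) (hc : 0 < c) (ρ : ℝ) (k : ℕ) :
    F g ρ (k + 1) ≤ c⁻¹ ^ k * F g (ρ + c) 1 := by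
  have hint := (integrable_exp_neg_mul_sq_add_mul hg (ρ + c - 1)).const_mul (c⁻¹ ^ k)
  rw [F_one_eq, ← integral_const_mul]
  refine integral_mono_of_nonneg ?_ hint.integrableOn ?_ <;>
    filter_upwards [ae_restrict_mem measurableSet_Ioi] with t (ht : 0 < t)
  · positivity
  have hpow : t ^ k / k.factorial ≤ c⁻¹ ^ k * exp (c * t) := by
    calc t ^ k / k.factorial = c⁻¹ ^ k * ((c * t) ^ k / k.factorial) := by
          rw [mul_pow, ← mul_div_assoc, ← mul_assoc, ← mul_pow, inv_mul_cancel₀ hc.ne',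
            one_pow, one_mul]
      _ ≤ c⁻¹ ^ k * exp (c * t) := by
          gcongr; exact pow_div_factorial_le_exp _ (by positivity) k
  rw [Nat.add_sub_cancel]
  calc t ^ k / k.factorial * exp (-t - g * t ^ 2 + ρ * t)
      ≤ c⁻¹ ^ k * exp (c * t) * exp (-t - g * t ^ 2 + ρ * t) := by gcongr
    _ = c⁻¹ ^ k * exp (-g * t ^ 2 + (ρ + c - 1) * t) := by
        rw [mul_assoc, ← exp_add]; ring_nf

lemma sqrt_pi_mul_exp_le_pow_mul_revisitFactor_pow {a : ℝ} (ha : 0 ≤ a) {k : ℕ}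
    (hk : 1 ≤ k) :
    √π * exp ((a + 1 / 2) ^ 2) ≤ exp (a ^ 2 - 1) ^ (k + 1) * revisitFactor a ^ k := by
  have hπ : 1 ≤ √π := one_le_sqrt.2 (by linarith [pi_gt_three])
  have hk' : (1 : ℝ) ≤ k := by exact_mod_cast hk
  rw [revisitFactor, mul_pow, ← exp_nat_mul, ← exp_nat_mul, mul_left_comm, ← exp_add]
  gcongr
  · exact le_self_pow₀ hπ (by omega)
  · push_cast; nlinarith

lemma F_le_pow_mul_revisitFactor_pow {g ρ : ℝ} (hg : 0 < g) (hρ : 1 ≤ ρ) {m : ℕ}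
    (hm : 1 ≤ m) :
    F g ρ m ≤ F g ρ 1 ^ m * revisitFactor (alpha g ρ) ^ (m - 1) := by
  obtain ⟨k, rfl⟩ := Nat.exists_eq_add_of_le' hm
  rcases Nat.eq_zero_or_pos k with rfl | hk
  · simp
  have hsg : 0 < √g := sqrt_pos.2 hg
  have hα : 0 ≤ alpha g ρ := div_nonneg (by linarith) (by positivity)
  calc F g ρ (k + 1) ≤ (√g)⁻¹ ^ k * F g (ρ + √g) 1 := F_succ_le_inv_pow_mul hg hsg ρ k
    _ ≤ (√g)⁻¹ ^ k * (√π * (√g)⁻¹ * exp (alpha g (ρ + √g) ^ 2)) := by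
        gcongr; exact F_one_le hg _
    _ = (√g)⁻¹ ^ (k + 1) * (√π * exp ((alpha g ρ + 1 / 2) ^ 2)) := by
        rw [alpha_add_sqrt hg]; ring
    _ ≤ (√g)⁻¹ ^ (k + 1) *
          (exp (alpha g ρ ^ 2 - 1) ^ (k + 1) * revisitFactor (alpha g ρ) ^ k) :=
        mul_le_mul_of_nonneg_left (sqrt_pi_mul_exp_le_pow_mul_revisitFactor_pow hα hk)
          (by positivity)
    _ = ((√g)⁻¹ * exp (alpha g ρ ^ 2 - 1)) ^ (k + 1) * revisitFactor (alpha g ρ) ^ k := by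
        ring
    _ ≤ F g ρ 1 ^ (k + 1) * revisitFactor (alpha g ρ) ^ (k + 1 - 1) := by
        rw [Nat.add_sub_cancel]
        exact mul_le_mul_of_nonneg_right (pow_le_pow_left₀ (by positivity) (F_one_ge hg hρ) _)
          (pow_nonneg (revisitFactor_nonneg _) _)

open Finset

section Walks

variable {d n : ℕ} (s : Fin n → Fin d × Bool)

lemma walkPos_zero : walkPos s 0 = 0 := by
  simp [walkPos]

lemma walkPos_succ (i : Fin n) : walkPos s i.succ = walkPos s i.castSucc + stepVec d (s i) := by
  have : univ.filter (fun j : Fin n => (j : ℕ) < i.succ) =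
      insert i (univ.filter fun j : Fin n => (j : ℕ) < i.castSucc) := by
    ext j
    simp only [mem_filter, mem_insert, mem_univ, true_and, Fin.val_succ, Fin.val_castSucc,
      Fin.ext_iff]
    omega
  rw [walkPos, walkPos, this, sum_insert (by simp), add_comm]

def IsFirstVisit (k : Fin (n + 1)) : Prop :=
  ∀ j < k, walkPos s j ≠ walkPos s k

instance (k : Fin (n + 1)) : Decidable (IsFirstVisit s k) := by
  unfold IsFirstVisit; infer_instance

def revisits : ℕ :=
  (univ.filter fun k : Fin (n + 1) => ¬ IsFirstVisit s k).card

lemma isFirstVisit_zero : IsFirstVisit s 0 :=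
  fun j hj => absurd hj (Fin.not_lt_zero j)

lemma selfAvoiding_iff_forall_isFirstVisit : SelfAvoiding s ↔ ∀ k, IsFirstVisit s k := by
  refine ⟨fun hs k j hj => hs.ne hj.ne, fun h j k hjk => ?_⟩
  by_contra hne
  rcases lt_or_gt_of_ne hne with hlt | hlt
  · exact h k j hlt hjk
  · exact h j k hlt hjk.symm

lemma revisits_eq_zero_of_selfAvoiding {s : Fin n → Fin d × Bool} (hs : SelfAvoiding s) :
    revisits s = 0 := by
  simp [revisits, (selfAvoiding_iff_forall_isFirstVisit s).1 hs]

lemma exists_isFirstVisit_walkPos_eq (k : Fin (n + 1)) :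
    ∃ j, IsFirstVisit s j ∧ walkPos s j = walkPos s k := by
  induction k using WellFoundedLT.induction with
  | ind k ih =>
    by_cases hk : IsFirstVisit s k
    · exact ⟨k, hk, rfl⟩
    · simp only [IsFirstVisit, not_forall, not_not] at hk
      obtain ⟨j, hjk, hj⟩ := hk
      obtain ⟨i, hi, hij⟩ := ih j hjk
      exact ⟨i, hi, hij.trans hj⟩

lemma card_walkRange_add_revisits : (walkRange s).card + revisits s = n + 1 := by
  have himage : walkRange s = (univ.filter (IsFirstVisit s)).image (walkPos s) := by
    ext v
    simp only [walkRange, mem_image, mem_univ, true_and, mem_filter]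
    constructor
    · rintro ⟨k, rfl⟩; exact exists_isFirstVisit_walkPos_eq s k
    · rintro ⟨k, -, rfl⟩; exact ⟨k, rfl⟩
  have hinj : Set.InjOn (walkPos s) (univ.filter (IsFirstVisit s)) := by
    intro j hj k hk hjk
    simp only [coe_filter, mem_univ, true_and, Set.mem_ofPred_eq] at hj hk
    by_contra hne
    rcases lt_or_gt_of_ne hne with hlt | hlt
    · exact hk j hlt hjk
    · exact hj k hlt hjk.symm
  rw [himage, card_image_of_injOn hinj, revisits, card_filter_add_card_filter_not, card_univ,
    Fintype.card_fin]

lemma sum_visits : ∑ v ∈ walkRange s, visits s v = n + 1 := by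
  simp only [walkRange, visits]
  rw [← card_eq_sum_card_image, card_univ, Fintype.card_fin]

lemma one_le_visits {v : Fin d → ℤ} (hv : v ∈ walkRange s) : 1 ≤ visits s v := by
  obtain ⟨k, -, rfl⟩ := mem_image.1 hv
  exact card_pos.2 ⟨k, by simp⟩

lemma sum_visits_sub_one : ∑ v ∈ walkRange s, (visits s v - 1) = revisits s := by
  have h : ∑ v ∈ walkRange s, (visits s v - 1) + (walkRange s).card = n + 1 := by
    rw [← sum_visits s, card_eq_sum_ones, ← sum_add_distrib]
    exact sum_congr rfl fun v hv => Nat.sub_add_cancel (one_le_visits s hv)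
  linarith [card_walkRange_add_revisits s]

lemma prod_le_pow_mul_pow_revisits {f : ℕ → ℝ} {a b : ℝ} (hf0 : ∀ m, 0 ≤ f m)
    (hf : ∀ m, 1 ≤ m → f m ≤ a ^ m * b ^ (m - 1)) :
    ∏ v ∈ walkRange s, f (visits s v) ≤ a ^ (n + 1) * b ^ revisits s := by
  calc ∏ v ∈ walkRange s, f (visits s v)
      ≤ ∏ v ∈ walkRange s, a ^ visits s v * b ^ (visits s v - 1) :=
        prod_le_prod (fun v _ => hf0 _) fun v hv => hf _ (one_le_visits s hv)
    _ = a ^ (n + 1) * b ^ revisits s := by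
        rw [prod_mul_distrib, prod_pow_eq_pow_sum, prod_pow_eq_pow_sum, sum_visits,
          sum_visits_sub_one]

end Walks

section Renewal

variable {d n : ℕ}

def subwalk {α : Type*} (s : Fin n → α) (a b : ℕ) (h : a + b ≤ n) : Fin b → α :=
  fun i => s ⟨a + i, by omega⟩

lemma walkPos_subwalk (s : Fin n → Fin d × Bool) {a b : ℕ} (h : a + b ≤ n)
    (k : Fin (b + 1)) :
    walkPos (subwalk s a b h) k =
      walkPos s ⟨a + k, by omega⟩ - walkPos s ⟨a, by omega⟩ := by
  induction k using Fin.induction with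
  | zero => simp [walkPos_zero]
  | succ k ih =>
    have e : (⟨a + k.succ, by omega⟩ : Fin (n + 1)) = (⟨a + k, by omega⟩ : Fin n).succ :=
      Fin.ext (by simp; omega)
    rw [walkPos_succ, ih, e, walkPos_succ]
    simp only [subwalk, Fin.castSucc_mk, Fin.val_castSucc]
    abel

lemma eq_of_subwalk_eq {α : Type*} {a b : ℕ} (hab : a + 1 + b = n) {s s' : Fin n → α}
    (hpre : subwalk s 0 a (by omega) = subwalk s' 0 a (by omega))
    (hstep : s ⟨a, by omega⟩ = s' ⟨a, by omega⟩)
    (hsuf : subwalk s (a + 1) b (by omega) = subwalk s' (a + 1) b (by omega)) : s = s' := by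
  funext ⟨i, hi⟩
  rcases lt_trichotomy i a with hia | rfl | hia
  · simpa [subwalk] using congrFun hpre ⟨i, hia⟩
  · exact hstep
  · have := congrFun hsuf ⟨i - (a + 1), by omega⟩
    simp only [subwalk, Nat.add_sub_cancel' (show a + 1 ≤ i by omega)] at this
    exact this

lemma not_isFirstVisit_of_subwalk (s : Fin n → Fin d × Bool) {a b : ℕ} (h : a + b ≤ n)
    {k : Fin (b + 1)} (hk : ¬ IsFirstVisit (subwalk s a b h) k) :
    ¬ IsFirstVisit s ⟨a + k, by omega⟩ := by
  simp only [IsFirstVisit, not_forall, not_not, walkPos_subwalk, sub_left_inj] at hk ⊢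
  obtain ⟨j, hjk, hj⟩ := hk
  exact ⟨⟨a + j, by omega⟩, Fin.mk_lt_mk.2 (Nat.add_lt_add_left hjk a), hj⟩

lemma revisits_subwalk_add_one_le (s : Fin n → Fin d × Bool) {a b : ℕ} (h : a + b ≤ n)
    (ha : ¬ IsFirstVisit s ⟨a, by omega⟩) : revisits (subwalk s a b h) + 1 ≤ revisits s := by
  set R := univ.filter fun k : Fin (n + 1) => ¬ IsFirstVisit s k
  have hmem : (⟨a, by omega⟩ : Fin (n + 1)) ∈ R := by simpa [R] using ha
  have hle : revisits (subwalk s a b h) ≤ (R.erase ⟨a, by omega⟩).card := by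
    refine card_le_card_of_injOn (fun k => ⟨a + k, by omega⟩) (fun k hk => ?_)
      (fun k _ k' _ hkk' => Fin.ext (by simpa using hkk'))
    simp only [coe_filter, mem_univ, true_and, Set.mem_ofPred_eq] at hk
    have hk0 : (k : ℕ) ≠ 0 := fun h0 => hk (by convert isFirstVisit_zero _; exact Fin.ext h0)
    refine mem_coe.2 (mem_erase.2 ⟨fun hka => hk0 ?_, mem_filter.2 ⟨mem_univ _, ?_⟩⟩)
    · simpa using congrArg Fin.val hka
    · exact not_isFirstVisit_of_subwalk s h hk
  rw [card_erase_of_mem hmem] at hle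
  have : 0 < R.card := card_pos.2 ⟨_, hmem⟩
  have hR : revisits s = R.card := rfl
  omega

-- `sInf ∅ = 0`: the junk value for a self-avoiding walk.
noncomputable def firstRevisit (s : Fin n → Fin d × Bool) : ℕ :=
  sInf {k | ∃ h : k < n + 1, ¬ IsFirstVisit s ⟨k, h⟩}

lemma firstRevisit_spec {s : Fin n → Fin d × Bool} (hs : ¬ SelfAvoiding s) :
    ∃ h : firstRevisit s < n + 1, ¬ IsFirstVisit s ⟨firstRevisit s, h⟩ := by
  obtain ⟨k, hk⟩ := not_forall.1 (mt (selfAvoiding_iff_forall_isFirstVisit s).2 hs)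
  exact Nat.sInf_mem (s := {k | ∃ h : k < n + 1, ¬ IsFirstVisit s ⟨k, h⟩})
    ⟨k, k.isLt, hk⟩

lemma isFirstVisit_of_lt_firstRevisit (s : Fin n → Fin d × Bool) {k : Fin (n + 1)}
    (hk : (k : ℕ) < firstRevisit s) : IsFirstVisit s k := by
  by_contra h
  exact (not_le.2 hk)
    (Nat.sInf_le (s := {k | ∃ h : k < n + 1, ¬ IsFirstVisit s ⟨k, h⟩}) ⟨k.isLt, h⟩)

lemma one_le_firstRevisit {s : Fin n → Fin d × Bool} (hs : ¬ SelfAvoiding s) :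
    1 ≤ firstRevisit s := by
  obtain ⟨h, hr⟩ := firstRevisit_spec hs
  by_contra h0
  have hzero : (⟨firstRevisit s, h⟩ : Fin (n + 1)) = 0 :=
    Fin.ext (by simp only [Fin.val_zero]; omega)
  exact hr (hzero ▸ isFirstVisit_zero s)

noncomputable def revisitWeight (d n : ℕ) (γ : ℝ) : ℝ :=
  ∑ s : Fin n → Fin d × Bool, γ ^ revisits s

lemma revisitWeight_nonneg {γ : ℝ} (hγ : 0 ≤ γ) : 0 ≤ revisitWeight d n γ :=
  sum_nonneg fun _ _ => pow_nonneg hγ _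

lemma sum_pow_revisits_le_of_firstRevisit_eq {a b : ℕ} (hab : a + 1 + b = n) {γ : ℝ}
    (hγ0 : 0 ≤ γ) (hγ1 : γ ≤ 1) (S : Finset (Fin n → Fin d × Bool))
    (hS : ∀ s ∈ S, ¬ SelfAvoiding s ∧ firstRevisit s = a + 1) :
    ∑ s ∈ S, γ ^ revisits s ≤ γ * (csaw d a * (2 * d) * revisitWeight d b γ) := by
  set Φ := fun s : Fin n → Fin d × Bool =>
    (subwalk s 0 a (by omega), s ⟨a, by omega⟩, subwalk s (a + 1) b (by omega))
  set T : Finset ((Fin a → Fin d × Bool) × (Fin d × Bool) × (Fin b → Fin d × Bool)) :=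
    (univ.filter fun x => SelfAvoiding x) ×ˢ (univ ×ˢ univ)
  have hΦ : ∀ s ∈ S, Φ s ∈ T := by
    intro s hs
    simp only [T, mem_product, mem_filter, mem_univ, and_true, true_and,
      selfAvoiding_iff_forall_isFirstVisit]
    intro k
    by_contra hk
    have := isFirstVisit_of_lt_firstRevisit s (k := ⟨0 + k, by omega⟩)
      (by have := k.isLt; simp only [(hS s hs).2]; omega)
    exact not_isFirstVisit_of_subwalk s (by omega) hk this
  have hstep : ∀ s ∈ S, γ ^ revisits s ≤ γ * γ ^ revisits (Φ s).2.2 := by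
    intro s hs
    obtain ⟨hsaw, hfirst⟩ := hS s hs
    obtain ⟨_, hrev⟩ := firstRevisit_spec hsaw
    simp only [hfirst] at hrev
    rw [← pow_succ']
    exact pow_le_pow_of_le_one hγ0 hγ1 (revisits_subwalk_add_one_le s (by omega) hrev)
  calc ∑ s ∈ S, γ ^ revisits s
      ≤ ∑ s ∈ S, γ * γ ^ revisits (Φ s).2.2 := sum_le_sum hstep
    _ = γ * ∑ y ∈ S.image Φ, γ ^ revisits y.2.2 := by
        rw [mul_sum, sum_image fun s _ s' _ h => by
          simp only [Φ, Prod.mk.injEq] at h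
          exact eq_of_subwalk_eq hab h.1 h.2.1 h.2.2]
    _ ≤ γ * ∑ y ∈ T, γ ^ revisits y.2.2 := by
        gcongr
        exact image_subset_iff.2 hΦ
    _ = γ * (csaw d a * (2 * d) * revisitWeight d b γ) := by
        simp only [T, sum_product, sum_const, card_univ, Fintype.card_prod, Fintype.card_fin,
          Fintype.card_bool, nsmul_eq_mul, csaw, revisitWeight]
        push_cast
        ring

lemma revisitWeight_le_csaw_add_sum {γ : ℝ} (hγ0 : 0 ≤ γ) (hγ1 : γ ≤ 1) :
    revisitWeight d n γ ≤
      csaw d n + ∑ a ∈ range n, γ * (csaw d a * (2 * d) * revisitWeight d (n - 1 - a) γ) := by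
  rw [revisitWeight, ← sum_filter_add_sum_filter_not univ SelfAvoiding]
  gcongr ?_ + ?_
  · rw [csaw, card_eq_sum_ones, Nat.cast_sum]
    exact le_of_eq (sum_congr rfl fun s hs => by
      rw [revisits_eq_zero_of_selfAvoiding (mem_filter.1 hs).2, pow_zero, Nat.cast_one])
  · have hmaps : ∀ s ∈ univ.filter fun s : Fin n → Fin d × Bool => ¬ SelfAvoiding s,
        firstRevisit s - 1 ∈ range n := by
      intro s hs
      have := (firstRevisit_spec (mem_filter.1 hs).2).1
      have := one_le_firstRevisit (mem_filter.1 hs).2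
      simp only [mem_range]; omega
    rw [← sum_fiberwise_of_maps_to hmaps]
    refine sum_le_sum fun a ha => sum_pow_revisits_le_of_firstRevisit_eq ?_ hγ0 hγ1 _ ?_
    · simp only [mem_range] at ha; omega
    · intro s hs
      simp only [mem_filter, mem_univ, true_and] at hs
      have := one_le_firstRevisit hs.1
      exact ⟨hs.1, by omega⟩

end Renewal

lemma revisitWeight_le_mul_pow {d : ℕ} {γ C M R : ℝ} (hγ0 : 0 ≤ γ) (hγ1 : γ ≤ 1)
    (hC : 0 ≤ C) (hM : 0 ≤ M) (hcsaw : ∀ m, (csaw d m : ℝ) ≤ C * M ^ m)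
    (hγ : 2 * d * C * γ ≤ R - M) (n : ℕ) :
    revisitWeight d n γ ≤ C * R ^ n := by
  have hR : 0 ≤ R := by nlinarith [show 0 ≤ 2 * d * C * γ by positivity]
  induction n using Nat.strong_induction_on with
  | _ n ih =>
    have hsum : 0 ≤ ∑ a ∈ range n, M ^ a * R ^ (n - 1 - a) := by positivity
    calc revisitWeight d n γ
        ≤ csaw d n +
            ∑ a ∈ range n, γ * (csaw d a * (2 * d) * revisitWeight d (n - 1 - a) γ) :=
          revisitWeight_le_csaw_add_sum hγ0 hγ1
      _ ≤ C * M ^ n + ∑ a ∈ range n, γ * (C * M ^ a * (2 * d) * (C * R ^ (n - 1 - a))) := by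
          gcongr with a ha
          · exact hcsaw n
          · exact revisitWeight_nonneg hγ0
          · exact hcsaw a
          · exact ih _ (by simp only [mem_range] at ha; omega)
      _ = C * M ^ n + 2 * d * C * γ * C * ∑ a ∈ range n, M ^ a * R ^ (n - 1 - a) := by
          rw [mul_sum]; congr 1; exact sum_congr rfl fun a _ => by ring
      _ ≤ C * M ^ n + (R - M) * C * ∑ a ∈ range n, M ^ a * R ^ (n - 1 - a) := by gcongr
      _ = C * R ^ n := by linear_combination (-C) * geom_sum₂_mul M R n

lemma wTot_nonneg {d : ℕ} {δ : ℝ} (hδ : δ ≤ 1) (n : ℕ) (g ρ : ℝ) :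
    0 ≤ wTot d δ n g ρ :=
  mul_nonneg (pow_nonneg (div_nonneg (by linarith) (by positivity)) n)
    (sum_nonneg fun _ _ => prod_nonneg fun _ _ => F_nonneg g ρ _)

lemma wTot_le_of_revisitWeight_le {d n : ℕ} {δ g ρ B : ℝ} (hδ : δ ≤ 1) (hg : 0 < g)
    (hρ : 1 ≤ ρ) (hB : revisitWeight d n (revisitFactor (alpha g ρ)) ≤ B) :
    wTot d δ n g ρ ≤ ((1 - δ) / (2 * d)) ^ n * (F g ρ 1 ^ (n + 1) * B) := by
  rw [wTot]
  refine mul_le_mul_of_nonneg_left ?_ (pow_nonneg (div_nonneg (by linarith) (by positivity)) n)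
  calc ∑ s : Fin n → Fin d × Bool, ∏ v ∈ walkRange s, F g ρ (visits s v)
      ≤ ∑ s : Fin n → Fin d × Bool,
          F g ρ 1 ^ (n + 1) * revisitFactor (alpha g ρ) ^ revisits s :=
        sum_le_sum fun s _ => prod_le_pow_mul_pow_revisits s (F_nonneg g ρ)
          fun m hm => F_le_pow_mul_revisitFactor_pow hg hρ hm
    _ ≤ F g ρ 1 ^ (n + 1) * B := by
        rw [← mul_sum]; exact mul_le_mul_of_nonneg_left hB (pow_nonneg (F_nonneg g ρ 1) _)

lemma exists_le_mul_pow_of_tendsto_rpow_inv {u : ℕ → ℝ} {μ M : ℝ} (hu : ∀ n, 0 ≤ u n)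
    (h : Tendsto (fun n : ℕ => u n ^ (n : ℝ)⁻¹) atTop (𝓝 μ)) (hM : μ < M) :
    ∃ C, 0 < C ∧ ∀ n, u n ≤ C * M ^ n := by
  have hM0 : 0 < M := (ge_of_tendsto' h fun n => rpow_nonneg (hu n) _).trans_lt hM
  obtain ⟨N, hN⟩ := eventually_atTop.1
    ((eventually_ge_atTop 1).and (h.eventually (eventually_le_nhds hM)))
  set C := 1 + ∑ m ∈ range N, u m / M ^ m
  have hC : 1 ≤ C := le_add_of_nonneg_right (sum_nonneg fun m _ => by have := hu m; positivity)
  refine ⟨C, by linarith, fun n => ?_⟩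
  rcases lt_or_ge n N with hn | hn
  · calc u n = u n / M ^ n * M ^ n := by field_simp
      _ ≤ C * M ^ n := by
          gcongr
          exact (single_le_sum (f := fun m => u m / M ^ m) (fun m _ => by have := hu m; positivity)
            (mem_range.2 hn)).trans
            (le_add_of_nonneg_left zero_le_one)
  · obtain ⟨hn1, hnM⟩ := hN n hn
    calc u n = (u n ^ (n : ℝ)⁻¹) ^ n := (rpow_inv_natCast_pow (hu n) (by omega)).symm
      _ ≤ M ^ n := pow_le_pow_left₀ (rpow_nonneg (hu n) _) hnM n
      _ ≤ C * M ^ n := le_mul_of_one_le_left (by positivity) hC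

lemma limsup_nonneg_of_nonneg {ι : Type*} {l : Filter ι} [l.NeBot] {u : ι → ℝ}
    (h : ∀ i, 0 ≤ u i) : 0 ≤ limsup u l := by
  rw [limsup_eq]
  refine sInf_nonneg fun a ha => ?_
  obtain ⟨i, hi⟩ := ha.exists
  exact (h i).trans hi

lemma limsup_le_of_eventually_le_of_tendsto {ι : Type*} {l : Filter ι} [l.NeBot]
    {u v : ι → ℝ} {b : ℝ} (hu : l.IsCoboundedUnder (· ≤ ·) u) (huv : u ≤ᶠ[l] v)
    (hv : Tendsto v l (𝓝 b)) :
    limsup u l ≤ b :=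
  (limsup_le_limsup huv hu hv.isBoundedUnder_le).trans_eq hv.limsup_eq

lemma limsup_rpow_inv_le_of_le_mul_pow {w : ℕ → ℝ} {K Λ : ℝ} (hK : 0 < K) (hΛ : 0 ≤ Λ)
    (hw0 : ∀ n, 0 ≤ w n) (hw : ∀ n, w n ≤ K * Λ ^ n) :
    limsup (fun n : ℕ => w n ^ (n : ℝ)⁻¹) atTop ≤ Λ := by
  have hK1 : Tendsto (fun n : ℕ => K ^ (n : ℝ)⁻¹) atTop (𝓝 1) := by
    simpa [Function.comp_def] using (continuousAt_const_rpow hK.ne').tendsto.comp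
      (tendsto_inv_atTop_zero.comp tendsto_natCast_atTop_atTop)
  refine limsup_le_of_eventually_le_of_tendsto
    (isCoboundedUnder_le_of_le atTop fun n => rpow_nonneg (hw0 n) _) ?_
    (by simpa using hK1.mul_const Λ)
  filter_upwards [eventually_ne_atTop 0] with n hn
  calc w n ^ (n : ℝ)⁻¹
      ≤ (K * Λ ^ n) ^ (n : ℝ)⁻¹ := rpow_le_rpow (hw0 n) (hw n) (by positivity)
    _ = K ^ (n : ℝ)⁻¹ * Λ := by
        rw [mul_rpow hK.le (by positivity), pow_rpow_inv_natCast hΛ hn]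

lemma eventually_limsup_rpow_wTot_le {d : ℕ} {δ μ ε : ℝ} (hδ : δ ≤ 1)
    (hμ : Tendsto (fun n : ℕ => (csaw d n : ℝ) ^ (n : ℝ)⁻¹) atTop (𝓝 μ))
    {ρ : ℝ → ℝ} (hα : Tendsto (fun g => alpha g (ρ g)) atTop atTop) (hε : 0 < ε) :
    ∀ᶠ g in atTop, limsup (fun n : ℕ => wTot d δ n g (ρ g) ^ (n : ℝ)⁻¹) atTop ≤
      (1 - δ) / (2 * d) * (√π * (√g)⁻¹ * exp (alpha g (ρ g) ^ 2)) * (μ + ε) := by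
  have hμ0 : 0 ≤ μ := ge_of_tendsto' hμ fun n => by positivity
  obtain ⟨C, hC, hcsaw⟩ := exists_le_mul_pow_of_tendsto_rpow_inv (fun n => Nat.cast_nonneg _)
    hμ (show μ < μ + ε / 2 by linarith)
  have hγ := tendsto_revisitFactor_atTop.comp hα
  have hγC : Tendsto (fun g => 2 * d * C * revisitFactor (alpha g (ρ g))) atTop (𝓝 0) := by
    simpa using hγ.const_mul (2 * d * C)
  filter_upwards [eventually_gt_atTop 0, hα.eventually_ge_atTop 0,
    hγ.eventually (eventually_le_nhds one_pos),
    hγC.eventually (eventually_le_nhds (half_pos hε))]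
    with g hg hα0 hγ1 hγε
  have hρ : 1 ≤ ρ g := by
    have := (div_nonneg_iff.1 hα0).resolve_right fun h => by linarith [h.2, sqrt_pos.2 hg]
    linarith [this.1]
  have hF1 : 0 < F g (ρ g) 1 :=
    (by positivity : (0 : ℝ) < (√g)⁻¹ * exp (alpha g (ρ g) ^ 2 - 1)).trans_le
      (F_one_ge hg hρ)
  have hq : 0 ≤ (1 - δ) / (2 * d) := div_nonneg (by linarith) (by positivity)
  have hw : ∀ n, wTot d δ n g (ρ g) ≤
      (F g (ρ g) 1 * C) * ((1 - δ) / (2 * d) * F g (ρ g) 1 * (μ + ε)) ^ n := fun n =>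
    (wTot_le_of_revisitWeight_le hδ hg hρ (revisitWeight_le_mul_pow (R := μ + ε)
      (revisitFactor_nonneg _) hγ1 hC.le (by linarith) hcsaw (by linarith) n)).trans_eq
      (by rw [mul_pow, mul_pow, pow_succ]; ring)
  calc limsup (fun n : ℕ => wTot d δ n g (ρ g) ^ (n : ℝ)⁻¹) atTop
      ≤ (1 - δ) / (2 * d) * F g (ρ g) 1 * (μ + ε) :=
        limsup_rpow_inv_le_of_le_mul_pow (by positivity) (by positivity)
          (fun n => wTot_nonneg hδ n g (ρ g)) hw
    _ ≤ (1 - δ) / (2 * d) * (√π * (√g)⁻¹ * exp (alpha g (ρ g) ^ 2)) * (μ + ε) := by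
        gcongr; exact F_one_le hg _

theorem limsup_growth_rate_le_general (d : ℕ) (δ : ℝ) (hδ : δ ∈ Set.Ioo (0 : ℝ) 1)
    (p : ℝ) (muSAW : ℝ)
    (hmuSAW : Tendsto (fun n : ℕ => ((csaw d n : ℝ)) ^ ((n : ℝ)⁻¹)) atTop (𝓝 muSAW))
    (ρ : ℝ → ℝ)
    (hα : Tendsto (fun g : ℝ => (ρ g - 1) / (2 * Real.sqrt g)) atTop atTop)
    (hlim : Tendsto (fun g : ℝ =>
        g ^ (-(1 : ℝ) / 2) * Real.exp (((ρ g - 1) / (2 * Real.sqrt g)) ^ 2)) atTop (𝓝 p))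
    (z : ℝ) (hz : z = (2 * d : ℝ)⁻¹ * (1 - δ) * p * Real.sqrt Real.pi) :
    limsup (fun g : ℝ =>
        limsup (fun n : ℕ => (wTot d δ n g (ρ g)) ^ ((n : ℝ)⁻¹)) atTop) atTop
      ≤ z * muSAW := by
  set c := (1 - δ) / (2 * d) * √π * p
  have hbound : ∀ ε > 0, limsup (fun g : ℝ =>
      limsup (fun n : ℕ => (wTot d δ n g (ρ g)) ^ ((n : ℝ)⁻¹)) atTop) atTop ≤
        c * (muSAW + ε) := by
    intro ε hε
    refine limsup_le_of_eventually_le_of_tendsto (isCoboundedUnder_le_of_le atTop fun g =>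
      limsup_nonneg_of_nonneg fun n => rpow_nonneg (wTot_nonneg hδ.2.le n g (ρ g)) _) ?_
      ((hlim.const_mul ((1 - δ) / (2 * d) * √π)).mul_const (muSAW + ε))
    filter_upwards [eventually_limsup_rpow_wTot_le hδ.2.le hmuSAW hα hε, eventually_gt_atTop 0]
      with g hg hg0
    have hsqrt : (√g)⁻¹ = g ^ (-(1 : ℝ) / 2) := by
      rw [sqrt_eq_rpow, ← rpow_neg hg0.le, neg_div]
    rw [hsqrt, alpha] at hg
    exact hg.trans_eq (by ring_nf)
  have hc : Tendsto (fun ε => c * (muSAW + ε)) (𝓝[>] 0) (𝓝 (z * muSAW)) := by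
    rw [show z * muSAW = c * (muSAW + 0) by rw [hz, add_zero]; ring]
    exact ((continuous_const.mul (continuous_const.add continuous_id)).tendsto 0).mono_left
      nhdsWithin_le_nhds
  exact ge_of_tendsto hc (eventually_nhdsWithin_of_forall hbound)

/-- with `μ(g,ρ) = limsup_n w_n(g,ρ)^{1/n}` and
`z = (2d)⁻¹(1-δ) p √π`, one has `limsup_{g→∞} μ(g,ρ(g)) ≤ z μ`, where `μ` is the
connective constant of the self-avoiding walk. -/
theorem limsup_growth_rate_le (d : ℕ) (hd : 1 ≤ d) (δ : ℝ) (hδ : δ ∈ Set.Ioo (0 : ℝ) 1)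
    (p : ℝ) (hp : 0 < p) (muSAW : ℝ)
    (hmuSAW : Tendsto (fun n : ℕ => ((csaw d n : ℝ)) ^ ((n : ℝ)⁻¹)) atTop (𝓝 muSAW))
    (ρ : ℝ → ℝ)
    (hα : Tendsto (fun g : ℝ => (ρ g - 1) / (2 * Real.sqrt g)) atTop atTop)
    (hlim : Tendsto (fun g : ℝ =>
        g ^ (-(1 : ℝ) / 2) * Real.exp (((ρ g - 1) / (2 * Real.sqrt g)) ^ 2)) atTop (𝓝 p))
    (z : ℝ) (hz : z = (2 * d : ℝ)⁻¹ * (1 - δ) * p * Real.sqrt Real.pi) :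
    limsup (fun g : ℝ =>
        limsup (fun n : ℕ => (wTot d δ n g (ρ g)) ^ ((n : ℝ)⁻¹)) atTop) atTop
      ≤ z * muSAW :=
  limsup_growth_rate_le_general d δ hδ p muSAW hmuSAW ρ hα hlim z hz

end StrongInteraction
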